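/- arXiv:2305.16520 — 4 statements merged into one kernel-verified Lean document; each statement's English description precedes it below -/
import Mathlib

section
/- Suppose the random variable K takes values in {0,1,…,n}, and P(K ≥ k) ≤ q for some integer k ≥ 1 and some q ∈ [0,1]. Then H(K) ≤ h₁(q) + log k + q log n, where h₁(q) = −q log q − (1−q) log(1−q) for q ∈ [0,1/2] and h₁(q) = 1 for q ∈ [1/2,1], and H(K) is the base-2 Shannon entropy of K. -/
open Finset
open scoped Classical

/-- The probability of an event on a finite probability space with weights `w`. -/
noncomputable def prEvt {Ω : Type*} [Fintype Ω] (w : Ω → ℝ) (E : Ω → Prop) : ℝ :=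
  ∑ ω ∈ Finset.univ.filter E, w ω

/-- The function `h₁` of Pippenger's lemma: `h₁(q)` is the binary entropy of `q` for
`q ∈ [0,1/2]` and `1` for `q ∈ [1/2,1]`. -/
noncomputable def h1 (q : ℝ) : ℝ :=
  if q ≤ 1 / 2 then -q * Real.logb 2 q - (1 - q) * Real.logb 2 (1 - q) else 1

lemma ent_sum_le {ι : Type*} (A : Finset ι) (p : ι → ℝ) (h0 : ∀ i ∈ A, 0 ≤ p i) :
    ∑ i ∈ A, -(p i) * Real.log (p i) ≤
      -(∑ i ∈ A, p i) * Real.log (∑ i ∈ A, p i) + (∑ i ∈ A, p i) * Real.log A.card := by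
  classical
  set T := A.filter (fun i => 0 < p i) with hT
  have hsub : T ⊆ A := Finset.filter_subset _ _
  have hzero : ∀ i ∈ A, i ∉ T → p i = 0 := by
    intro i hi hiT
    have := h0 i hi
    by_contra h
    exact hiT (Finset.mem_filter.2 ⟨hi, lt_of_le_of_ne this (Ne.symm h)⟩)
  have hLHS : ∑ i ∈ A, -(p i) * Real.log (p i) = ∑ i ∈ T, -(p i) * Real.log (p i) := by
    rw [← Finset.sum_subset hsub]
    intro i hi hiT
    simp [hzero i hi hiT]
  have hS : ∑ i ∈ A, p i = ∑ i ∈ T, p i := by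
    rw [← Finset.sum_subset hsub]
    intro i hi hiT
    exact hzero i hi hiT
  rcases T.eq_empty_or_nonempty with hTe | hTne
  · rw [hLHS, hS, hTe]
    simp
  · set S := ∑ i ∈ T, p i with hSdef
    have hpos : ∀ i ∈ T, 0 < p i := fun i hi => (Finset.mem_filter.1 hi).2
    have hSpos : 0 < S := Finset.sum_pos hpos hTne
    have jensen := (strictConcaveOn_log_Ioi.concaveOn).le_map_sum
      (t := T) (w := fun i => p i / S) (p := fun i => (p i)⁻¹)
      (fun i hi => div_nonneg (hpos i hi).le hSpos.le)
      (by rw [← Finset.sum_div, div_self hSpos.ne'])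
      (fun i hi => Set.mem_Ioi.2 (inv_pos.2 (hpos i hi)))
    have hinner : ∑ i ∈ T, (p i / S) • (p i)⁻¹ = T.card / S := by
      have heach : ∀ i ∈ T, (p i / S) • (p i)⁻¹ = 1 / S := by
        intro i hi
        have h := (hpos i hi).ne'
        rw [smul_eq_mul]
        field_simp
      rw [Finset.sum_congr rfl heach, Finset.sum_const, nsmul_eq_mul]
      ring
    rw [hinner] at jensen
    have hmul : ∑ i ∈ T, (p i / S) • Real.log (p i)⁻¹ = (∑ i ∈ T, -(p i) * Real.log (p i)) / S := by
      rw [Finset.sum_div]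
      refine Finset.sum_congr rfl (fun i hi => ?_)
      rw [Real.log_inv, smul_eq_mul]
      ring
    rw [hmul] at jensen
    have h1 : ∑ i ∈ T, -(p i) * Real.log (p i) ≤ S * Real.log ((T.card : ℝ) / S) := by
      rw [mul_comm]
      exact (div_le_iff₀ hSpos).1 jensen
    have hcardpos : (0 : ℝ) < T.card := by
      exact_mod_cast Finset.card_pos.2 hTne
    have h2 : Real.log ((T.card : ℝ) / S) = Real.log T.card - Real.log S :=
      Real.log_div hcardpos.ne' hSpos.ne'
    have h3 : Real.log (T.card : ℝ) ≤ Real.log (A.card : ℝ) :=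
      Real.log_le_log hcardpos (by exact_mod_cast Finset.card_le_card hsub)
    rw [hLHS, hS]
    calc ∑ i ∈ T, -(p i) * Real.log (p i) ≤ S * Real.log ((T.card : ℝ) / S) := h1
      _ = -S * Real.log S + S * Real.log T.card := by rw [h2]; ring
      _ ≤ -S * Real.log S + S * Real.log A.card := by
          have := mul_le_mul_of_nonneg_left h3 hSpos.le
          linarith

/-- If the random variable `K` takes values in `{0,1,…,n}` and
`P(K ≥ k) ≤ q` for some integer `k ≥ 1` and `q ∈ [0,1]`, then
`H(K) ≤ h₁(q) + log₂ k + q log₂ n`. -/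
theorem stmt2 {Ω : Type*} [Fintype Ω] (w : Ω → ℝ) (K : Ω → ℕ) (n k : ℕ) (q : ℝ)
    (hw0 : ∀ ω, 0 ≤ w ω) (hw1 : ∑ ω, w ω = 1)
    (hn : 1 ≤ n) (hK : ∀ ω, K ω ≤ n) (hk : 1 ≤ k)
    (hq0 : 0 ≤ q) (hq1 : q ≤ 1)
    (htail : prEvt w (fun ω => k ≤ K ω) ≤ q) :
    ∑ i ∈ Finset.range (n + 1),
        -(prEvt w (fun ω => K ω = i)) * Real.logb 2 (prEvt w (fun ω => K ω = i)) ≤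
      h1 q + Real.logb 2 k + q * Real.logb 2 n := by
  classical
  have hL : (0:ℝ) < Real.log 2 := Real.log_pos (by norm_num)
  set p : ℕ → ℝ := fun i => prEvt w (fun ω => K ω = i) with hpdef
  have hpe : ∀ i, prEvt w (fun ω => K ω = i) = p i := fun _ => rfl
  simp only [hpe]
  have hp0 : ∀ i, 0 ≤ p i := fun i => Finset.sum_nonneg fun ω _ => hw0 ω
  set m := min k (n+1) with hm
  have hm1 : 1 ≤ m := le_min hk (by omega)
  have hmn : m ≤ n + 1 := min_le_right _ _
  have hmk : m ≤ k := min_le_left _ _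
  have hfib : ∀ s : Finset ℕ,
      ∑ i ∈ s, p i = ∑ ω ∈ Finset.univ.filter (fun ω => K ω ∈ s), w ω := by
    intro s
    have hmaps : ∀ ω ∈ Finset.univ.filter (fun ω => K ω ∈ s), K ω ∈ s :=
      fun ω hω => (Finset.mem_filter.1 hω).2
    rw [← Finset.sum_fiberwise_of_maps_to hmaps w]
    refine Finset.sum_congr rfl fun j hj => ?_
    simp only [hpdef, prEvt]
    refine Finset.sum_congr ?_ fun _ _ => rfl
    ext ω
    simp only [Finset.mem_filter, Finset.mem_univ, true_and]
    constructor
    · exact fun h => ⟨h ▸ hj, h⟩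
    · exact fun h => h.2
  have h1sum : ∑ i ∈ Finset.range (n+1), p i = 1 := by
    rw [hfib]
    have : Finset.univ.filter (fun ω => K ω ∈ Finset.range (n+1)) = Finset.univ := by
      ext ω
      simp [Finset.mem_range, Nat.lt_succ_iff, hK ω]
    rw [this, hw1]
  have hBq : ∑ i ∈ Finset.Ico m (n+1), p i ≤ q := by
    rw [hfib]
    refine le_trans ?_ htail
    simp only [prEvt]
    refine Finset.sum_le_sum_of_subset_of_nonneg ?_ (fun ω _ _ => hw0 ω)
    intro ω hω
    simp only [Finset.mem_filter, Finset.mem_Ico, Finset.mem_univ, true_and] at hω ⊢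
    omega
  set sA := ∑ i ∈ Finset.Ico 0 m, p i with hsAdef
  set sB := ∑ i ∈ Finset.Ico m (n+1), p i with hsBdef
  have hsum1 : sA + sB = 1 := by
    rw [hsAdef, hsBdef, Finset.sum_Ico_consecutive _ (Nat.zero_le m) hmn,
      ← Finset.range_eq_Ico, h1sum]
  have hsA0 : 0 ≤ sA := Finset.sum_nonneg fun i _ => hp0 i
  have hsB0 : 0 ≤ sB := Finset.sum_nonneg fun i _ => hp0 i
  have hsA1 : sA ≤ 1 := by linarith
  have hA1 : sA = 1 - sB := by linarith
  have main : ∑ i ∈ Finset.range (n + 1), -(p i) * Real.log (p i)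
      ≤ Real.log 2 * h1 q + Real.log k + q * Real.log n := by
    have hsplit : ∑ i ∈ Finset.range (n+1), -(p i) * Real.log (p i)
        = (∑ i ∈ Finset.Ico 0 m, -(p i) * Real.log (p i))
          + ∑ i ∈ Finset.Ico m (n+1), -(p i) * Real.log (p i) := by
      rw [Finset.range_eq_Ico, ← Finset.sum_Ico_consecutive _ (Nat.zero_le m) hmn]
    have hEA := ent_sum_le (Finset.Ico 0 m) p (fun i _ => hp0 i)
    have hEB := ent_sum_le (Finset.Ico m (n+1)) p (fun i _ => hp0 i)
    rw [Nat.card_Ico] at hEA hEB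
    simp only [Nat.sub_zero] at hEA
    rw [← hsAdef] at hEA
    rw [← hsBdef] at hEB
    have hbin : -sB * Real.log sB + -sA * Real.log sA = Real.binEntropy sB := by
      rw [hA1, Real.binEntropy, Real.log_inv, Real.log_inv]
      ring
    have hb1 : Real.binEntropy sB ≤ Real.log 2 * h1 q := by
      unfold h1
      split_ifs with hq2
      · have hqmem : q ∈ Set.Icc (0:ℝ) 2⁻¹ := ⟨hq0, by linarith⟩
        have hsmem : sB ∈ Set.Icc (0:ℝ) 2⁻¹ := ⟨hsB0, by linarith⟩
        have hmono := Real.binEntropy_strictMonoOn.monotoneOn hsmem hqmem hBq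
        refine hmono.trans (le_of_eq ?_)
        rw [Real.binEntropy, Real.log_inv, Real.log_inv, Real.logb, Real.logb]
        field_simp
        ring
      · rw [mul_one]
        exact Real.binEntropy_le_log_two
    have h2 : sA * Real.log m ≤ Real.log k := by
      have hlogm0 : 0 ≤ Real.log (m:ℝ) := Real.log_nonneg (by exact_mod_cast hm1)
      have hlogmk : Real.log (m:ℝ) ≤ Real.log (k:ℝ) :=
        Real.log_le_log (by exact_mod_cast hm1) (by exact_mod_cast hmk)
      calc sA * Real.log (m:ℝ) ≤ 1 * Real.log (m:ℝ) :=
            mul_le_mul_of_nonneg_right hsA1 hlogm0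
        _ = Real.log (m:ℝ) := one_mul _
        _ ≤ Real.log (k:ℝ) := hlogmk
    have h3 : sB * Real.log ((n+1-m : ℕ) : ℝ) ≤ q * Real.log n := by
      have hc0 : 0 ≤ Real.log ((n+1-m : ℕ):ℝ) := by
        rcases Nat.eq_zero_or_pos (n+1-m) with h | h
        · rw [h]; simp
        · exact Real.log_nonneg (by exact_mod_cast h)
      have hc1 : Real.log ((n+1-m : ℕ):ℝ) ≤ Real.log (n:ℝ) := by
        rcases Nat.eq_zero_or_pos (n+1-m) with h | h
        · rw [h]
          simpa using Real.log_nonneg (by exact_mod_cast hn : (1:ℝ) ≤ (n:ℝ))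
        · exact Real.log_le_log (by exact_mod_cast h)
            (by exact_mod_cast (by omega : n+1-m ≤ n))
      exact mul_le_mul hBq hc1 hc0 hq0
    calc ∑ i ∈ Finset.range (n+1), -(p i) * Real.log (p i)
        = (∑ i ∈ Finset.Ico 0 m, -(p i) * Real.log (p i))
          + ∑ i ∈ Finset.Ico m (n+1), -(p i) * Real.log (p i) := hsplit
      _ ≤ (-sA * Real.log sA + sA * Real.log (m:ℝ))
          + (-sB * Real.log sB + sB * Real.log ((n+1-m : ℕ):ℝ)) := add_le_add hEA hEB
      _ = Real.binEntropy sB + sA * Real.log (m:ℝ) + sB * Real.log ((n+1-m : ℕ):ℝ) := by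
          rw [← hbin]; ring
      _ ≤ Real.log 2 * h1 q + Real.log k + q * Real.log n := by
          linarith [hb1, h2, h3]
  have hLne : Real.log 2 ≠ 0 := hL.ne'
  calc ∑ i ∈ Finset.range (n + 1), -(p i) * Real.logb 2 (p i)
      = (∑ i ∈ Finset.range (n + 1), -(p i) * Real.log (p i)) / Real.log 2 := by
        rw [Finset.sum_div]
        exact Finset.sum_congr rfl fun i _ => by rw [Real.logb]; ring
    _ ≤ (Real.log 2 * h1 q + Real.log k + q * Real.log n) / Real.log 2 := by
        gcongr
    _ = h1 q + Real.logb 2 k + q * Real.logb 2 n := by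
        rw [Real.logb, Real.logb]
        field_simp
end

section
/- For all integers t ≥ 1 and n ≥ 1, the size N(t,n) of a largest level of the poset [t]^n satisfies N(t,n) ≥ 2·t^{n−1} / (3·√n). -/
open Finset
open scoped Classical

/-- The size of the `i`-th level of the poset `[t]^n`. -/
noncomputable def levelCard (t n i : ℕ) : ℕ :=
  (Finset.univ.filter (fun x : Fin n → Fin t => ∑ j, (x j : ℕ) = i)).card

/-- `N(t,n)`: the size of a largest level of `[t]^n`. -/
noncomputable def Nmax (t n : ℕ) : ℕ :=
  (Finset.range ((t - 1) * n + 1)).sup (levelCard t n)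

/- ### Auxiliary lemmas -/

lemma range_lin (t : ℕ) : 2 * ∑ a ∈ Finset.range t, (a:ℤ) = t*(t-1) := by
  induction t with
  | zero => simp
  | succ k ih => rw [Finset.sum_range_succ]; push_cast; push_cast at ih; ring_nf; ring_nf at ih; linarith

lemma range_sq (t : ℕ) : 6 * ∑ a ∈ Finset.range t, (a:ℤ)^2 = t*(t-1)*(2*t-1) := by
  induction t with
  | zero => simp
  | succ k ih => rw [Finset.sum_range_succ]; push_cast; push_cast at ih; ring_nf; ring_nf at ih; linarith

lemma sum_fin_lin (t : ℕ) : ∑ a : Fin t, (2*((a:ℕ):ℤ) - ((t:ℤ)-1)) = 0 := by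
  rw [Fin.sum_univ_eq_sum_range (fun a => (2*(a:ℤ) - ((t:ℤ)-1)))]
  have h2 := range_lin t
  rw [Finset.sum_sub_distrib, ← Finset.mul_sum]
  simp
  linarith

lemma sum_fin_sq (t : ℕ) : 3 * ∑ a : Fin t, (2*((a:ℕ):ℤ) - ((t:ℤ)-1))^2 = (t:ℤ)^3 - t := by
  rw [Fin.sum_univ_eq_sum_range (fun a => (2*(a:ℤ) - ((t:ℤ)-1))^2)]
  have h2 := range_lin t
  have h6 := range_sq t
  have expand : ∀ a : ℤ, (2*a - ((t:ℤ)-1))^2 = 4*a^2 - 4*((t:ℤ)-1)*a + ((t:ℤ)-1)^2 := by intro a; ring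
  simp_rw [expand]
  rw [Finset.sum_add_distrib, Finset.sum_sub_distrib, ← Finset.mul_sum, ← Finset.mul_sum]
  simp [Finset.sum_const, Finset.card_range]
  linear_combination 2 * h6 - 6*((t:ℤ)-1) * h2

noncomputable def Fz (t n : ℕ) (x : Fin n → Fin t) : ℤ := ∑ j, (2*((x j : ℕ):ℤ) - ((t:ℤ)-1))

lemma sum_split (t n : ℕ) (G : (Fin (n+1) → Fin t) → ℤ) :
    ∑ x : Fin (n+1) → Fin t, G x = ∑ a : Fin t, ∑ y : Fin n → Fin t, G (Fin.cons a y) := by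
  rw [← (Fin.consEquiv (fun _ : Fin (n+1) => Fin t)).sum_comp G]
  rw [Fintype.sum_prod_type]
  rfl

lemma Fz_cons (t n : ℕ) (a : Fin t) (y : Fin n → Fin t) :
    Fz t (n+1) (Fin.cons a y) = (2*((a:ℕ):ℤ) - ((t:ℤ)-1)) + Fz t n y := by
  unfold Fz
  rw [Fin.sum_univ_succ]
  simp

lemma sum_F (t : ℕ) : ∀ n, ∑ x : Fin n → Fin t, Fz t n x = 0 := by
  intro n
  induction n with
  | zero => simp [Fz]
  | succ n ih =>
    rw [sum_split]
    have : ∀ a : Fin t, ∑ y : Fin n → Fin t, Fz t (n+1) (Fin.cons a y)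
        = (Fintype.card (Fin n → Fin t) : ℤ) * (2*((a:ℕ):ℤ) - ((t:ℤ)-1)) := by
      intro a
      simp_rw [Fz_cons]
      rw [Finset.sum_add_distrib, ih]
      simp [mul_comm]
      ring
    simp_rw [this]
    rw [← Finset.mul_sum, sum_fin_lin t, mul_zero]

lemma sum_F_sq (t : ℕ) : ∀ n, 3 * (t:ℤ) * ∑ x : Fin n → Fin t, (Fz t n x)^2 = n * (t:ℤ)^n * ((t:ℤ)^3 - t) := by
  intro n
  induction n with
  | zero => simp [Fz]
  | succ n ih =>
    rw [sum_split]
    have key : ∀ a : Fin t, ∑ y : Fin n → Fin t, (Fz t (n+1) (Fin.cons a y))^2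
        = (t:ℤ)^n * (2*((a:ℕ):ℤ) - ((t:ℤ)-1))^2
          + 2*(2*((a:ℕ):ℤ) - ((t:ℤ)-1)) * (∑ y : Fin n → Fin t, Fz t n y)
          + ∑ y : Fin n → Fin t, (Fz t n y)^2 := by
      intro a
      simp_rw [Fz_cons]
      have expand : ∀ z : ℤ, ((2*((a:ℕ):ℤ) - ((t:ℤ)-1)) + z)^2
          = (2*((a:ℕ):ℤ) - ((t:ℤ)-1))^2 + 2*(2*((a:ℕ):ℤ) - ((t:ℤ)-1))*z + z^2 := by
        intro z; ring
      simp_rw [expand]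
      rw [Finset.sum_add_distrib, Finset.sum_add_distrib, ← Finset.mul_sum]
      rw [Finset.sum_const]
      have : (Finset.univ : Finset (Fin n → Fin t)).card = t^n := by
        simp [Fintype.card_fun]
      rw [this]
      push_cast
      ring
    simp_rw [key, sum_F t n]
    rw [Finset.sum_add_distrib, Finset.sum_add_distrib, ← Finset.mul_sum]
    simp only [mul_zero, Finset.sum_const, Finset.card_univ, Fintype.card_fun,
      Fintype.card_fin, add_zero, nsmul_eq_mul]
    have h3 := sum_fin_sq t
    push_cast
    linear_combination ((t:ℤ)^n * (t:ℤ)) * h3 + (t:ℤ) * ih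

lemma one_le_Nmax (t n : ℕ) (ht : 1 ≤ t) : 1 ≤ Nmax t n := by
  have h0 : (0:ℕ) ∈ Finset.range ((t-1)*n+1) := by simp
  have : 1 ≤ levelCard t n 0 := by
    rw [levelCard, Finset.one_le_card]
    refine ⟨fun _ => ⟨0, by omega⟩, ?_⟩
    simp
  exact le_trans this (Finset.le_sup h0)

lemma sum_le_aux (t n : ℕ) (x : Fin n → Fin t) : ∑ j, (x j : ℕ) ≤ (t-1)*n := by
  calc ∑ j, (x j : ℕ) ≤ ∑ _j : Fin n, (t-1) := by
        refine Finset.sum_le_sum fun j _ => ?_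
        have := (x j).isLt; omega
    _ = (t-1)*n := by simp [mul_comm]

lemma pigeon (t n : ℕ) (P : Finset (Fin n → Fin t)) (I : Finset ℕ)
    (hI : I ⊆ Finset.range ((t-1)*n+1))
    (hP : ∀ x ∈ P, (∑ j, (x j : ℕ)) ∈ I) :
    P.card ≤ I.card * Nmax t n := by
  have hsub : P ⊆ I.biUnion (fun i => Finset.univ.filter (fun x : Fin n → Fin t => ∑ j, (x j : ℕ) = i)) := by
    intro x hx
    exact Finset.mem_biUnion.2 ⟨_, hP x hx, by simp⟩
  calc P.card ≤ (I.biUnion _).card := Finset.card_le_card hsub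
    _ ≤ ∑ i ∈ I, levelCard t n i := Finset.card_biUnion_le
    _ ≤ ∑ _i ∈ I, Nmax t n := Finset.sum_le_sum fun i hi => Finset.le_sup (hI hi)
    _ = I.card * Nmax t n := by simp [mul_comm]

lemma levels_window (t n B M : ℕ) (hM : M = (t-1)*n) (hB2 : 2 ≤ B) (hpar : B % 2 = M % 2) :
    ((Finset.range (M+1)).filter
      (fun (i : ℕ) => 2*(i:ℤ) < (M:ℤ) + B ∧ (M:ℤ) < 2*(i:ℤ) + B)).card ≤ B - 1 := by
  have hsub : (Finset.range (M+1)).filter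
      (fun (i : ℕ) => 2*(i:ℤ) < (M:ℤ) + B ∧ (M:ℤ) < 2*(i:ℤ) + B) ⊆
      Finset.Icc ((M+2-B)/2) ((M+B-2)/2) := by
    intro i hi
    simp only [Finset.mem_filter, Finset.mem_range] at hi
    obtain ⟨hir, h1, h2⟩ := hi
    rw [Finset.mem_Icc]
    have h1' : 2*i < M + B := by exact_mod_cast h1
    have h2' : M < 2*i + B := by exact_mod_cast h2
    omega
  calc _ ≤ (Finset.Icc ((M+2-B)/2) ((M+B-2)/2)).card := Finset.card_le_card hsub
    _ = (M+B-2)/2 + 1 - (M+2-B)/2 := Nat.card_Icc _ _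
    _ ≤ B - 1 := by omega

lemma poly_key (T b : ℝ) (h1 : T ≤ b) (h2 : b ≤ T + 2) (h3 : 12 ≤ T^2) (h4 : 0 ≤ T) :
    T^3 ≤ (3*T - 2*b + 2)*b^2 := by
  nlinarith [sq_nonneg (T-2), mul_nonneg (sub_nonneg.2 h1) (sub_nonneg.2 h2),
    mul_nonneg (mul_nonneg (sub_nonneg.2 h1) (sub_nonneg.2 h2)) (sub_nonneg.2 h1),
    mul_nonneg (mul_nonneg (sub_nonneg.2 h1) (sub_nonneg.2 h2)) h4,
    mul_nonneg (sub_nonneg.2 h1) h4, sq_nonneg (b-T)]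

set_option maxHeartbeats 2000000 in
/-- For all integers `t, n ≥ 1`, `N(t,n) ≥ 2 t^{n−1} / (3 √n)`. -/
theorem stmt7 (t n : ℕ) (ht : 1 ≤ t) (hn : 1 ≤ n) :
    (2 * (t : ℝ) ^ (n - 1)) / (3 * Real.sqrt n) ≤ (Nmax t n : ℝ) := by
  have hsq0 : 0 < Real.sqrt n := Real.sqrt_pos.2 (by exact_mod_cast hn)
  have hsq1 : 1 ≤ Real.sqrt n := by
    rw [show (1:ℝ) = Real.sqrt 1 by simp]
    exact Real.sqrt_le_sqrt (by exact_mod_cast hn)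
  have hsqn : (Real.sqrt n)^2 = n := Real.sq_sqrt (by positivity)
  by_cases hcase : 12 ≤ t^2*n
  case neg =>
    -- trivial case : small t and n, RHS ≤ 1 ≤ Nmax
    have hN : (1:ℝ) ≤ Nmax t n := by exact_mod_cast one_le_Nmax t n ht
    refine le_trans ?_ hN
    rw [div_le_one (by positivity)]
    have ht3 : t ≤ 3 := by nlinarith
    interval_cases t
    · -- t = 1
      push_cast
      rw [one_pow]
      linarith
    · -- t = 2
      have hn2 : n ≤ 2 := by nlinarith
      interval_cases n
      · push_cast
        norm_num [Real.sqrt_one]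
      · have hc : ((2:ℕ):ℝ) = 2 := by norm_num
        rw [hc] at hsqn ⊢
        have h0 := Real.sqrt_nonneg (2:ℝ)
        have h4 : 2 * (2:ℝ)^(2-1) = 4 := by norm_num
        rw [h4]
        nlinarith [hsqn, h0]
    · -- t = 3
      have hn1 : n ≤ 1 := by nlinarith
      interval_cases n
      push_cast
      norm_num [Real.sqrt_one]
  case pos =>
    obtain ⟨m, rfl⟩ : ∃ m, n = m + 1 := ⟨n - 1, by omega⟩
    set n := m + 1 with hn_def
    set sq := Real.sqrt n with hsq_def
    set M : ℕ := (t-1)*n with hM_def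
    set k : ℕ := ⌈(t:ℝ)*sq⌉₊ with hk_def
    set B : ℕ := if k % 2 = M % 2 then k else k + 1 with hB_def
    -- basic facts about B
    have hTpos : 0 ≤ (t:ℝ)*sq := by positivity
    have hkB : k ≤ B ∧ B ≤ k + 1 := by rw [hB_def]; split <;> omega
    have hTb : (t:ℝ)*sq ≤ B := by
      refine le_trans (Nat.le_ceil _) ?_
      exact_mod_cast hkB.1
    have hBT : (B:ℝ) ≤ (t:ℝ)*sq + 2 := by
      have h1 : (k:ℝ) < (t:ℝ)*sq + 1 := Nat.ceil_lt_add_one hTpos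
      have h2 : (B:ℝ) ≤ (k:ℝ) + 1 := by exact_mod_cast hkB.2
      linarith
    have hT2 : 12 ≤ ((t:ℝ)*sq)^2 := by
      have : ((t:ℝ)*sq)^2 = (t:ℝ)^2 * n := by rw [mul_pow, hsqn]
      rw [this]
      exact_mod_cast hcase
    have hT3 : 3 ≤ (t:ℝ)*sq := by nlinarith
    have hB2 : 2 ≤ B := by
      have : (2:ℝ) ≤ (B:ℝ) := by linarith
      exact_mod_cast this
    have hpar : B % 2 = M % 2 := by rw [hB_def]; split <;> omega
    clear_value B
    clear_value k
    -- Chebyshev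
    set pred : (Fin n → Fin t) → Prop :=
      fun x => 2*((∑ j, (x j : ℕ) : ℕ):ℤ) < (M:ℤ) + B ∧ (M:ℤ) < 2*((∑ j, (x j : ℕ) : ℕ):ℤ) + B
      with hpred_def
    set P : Finset (Fin n → Fin t) := Finset.univ.filter pred with hP_def
    set Q : Finset (Fin n → Fin t) := Finset.univ.filter (fun x => ¬ pred x) with hQ_def
    have hFz : ∀ x : Fin n → Fin t, Fz t n x = 2*((∑ j, (x j : ℕ) : ℕ):ℤ) - M := by
      intro x
      unfold Fz
      rw [Finset.sum_sub_distrib, ← Finset.mul_sum, Finset.sum_const, Finset.card_univ,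
        Fintype.card_fin, nsmul_eq_mul]
      have hcast : ((M:ℕ):ℤ) = n * ((t:ℤ)-1) := by
        rw [hM_def]
        push_cast [Nat.cast_sub ht]
        ring
      rw [hcast]
      push_cast
      ring
    have hout : ∀ x ∈ Q, (B:ℤ)^2 ≤ (Fz t n x)^2 := by
      intro x hx
      rw [hQ_def, Finset.mem_filter] at hx
      have hnp : ¬ (2*((∑ j, (x j : ℕ) : ℕ):ℤ) < (M:ℤ) + B ∧ (M:ℤ) < 2*((∑ j, (x j : ℕ) : ℕ):ℤ) + B) := by
        simpa [hpred_def] using hx.2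
      rw [hFz x]
      set S : ℤ := ((∑ j, (x j : ℕ) : ℕ):ℤ) with hS_def
      have hB0 : (0:ℤ) ≤ (B:ℤ) := by positivity
      rcases le_or_gt ((M:ℤ) + B) (2*S) with h | h
      · nlinarith [h, hB0]
      · have h2 : (2*S + (B:ℤ)) ≤ M := by
          by_contra hc
          exact hnp ⟨h, by omega⟩
        nlinarith [h2, hB0]
    have cheb1 : (Q.card : ℤ) * (B:ℤ)^2 ≤ ∑ x ∈ Q, (Fz t n x)^2 := by
      have := Finset.card_nsmul_le_sum Q (fun x => (Fz t n x)^2) ((B:ℤ)^2) hout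
      simpa [nsmul_eq_mul] using this
    have cheb2 : ∑ x ∈ Q, (Fz t n x)^2 ≤ ∑ x : Fin n → Fin t, (Fz t n x)^2 :=
      Finset.sum_le_sum_of_subset_of_nonneg (Finset.filter_subset _ _)
        (fun x _ _ => sq_nonneg _)
    have cardsplit : P.card + Q.card = t^n := by
      rw [hP_def, hQ_def]
      rw [Finset.card_filter_add_card_filter_not]
      simp [Fintype.card_fun]
    -- pigeonhole
    set I : Finset ℕ := (Finset.range (M+1)).filter
      (fun (i : ℕ) => 2*(i:ℤ) < (M:ℤ) + B ∧ (M:ℤ) < 2*(i:ℤ) + B) with hI_def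
    have hIcard : I.card ≤ B - 1 := levels_window t n B M hM_def hB2 hpar
    have hPcard : P.card ≤ (B-1) * Nmax t n := by
      have h1 : P.card ≤ I.card * Nmax t n := by
        apply pigeon t n P I
        · rw [hI_def, hM_def]; exact Finset.filter_subset _ _
        · intro x hx
          rw [hP_def, Finset.mem_filter] at hx
          rw [hI_def, Finset.mem_filter, Finset.mem_range]
          refine ⟨by have := sum_le_aux t n x; omega, ?_, ?_⟩
          · exact_mod_cast hx.2.1
          · exact_mod_cast hx.2.2
      exact le_trans h1 (Nat.mul_le_mul_right _ hIcard)
    -- integer inequality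
    have moment := sum_F_sq t n
    have key_int : 3*(t:ℤ)*(((t:ℤ)^n - ((B:ℤ)-1)*(Nmax t n)) * (B:ℤ)^2) ≤ (n:ℤ) * (t:ℤ)^n * ((t:ℤ)^3 - t) := by
      have hq : ((t:ℤ)^n - ((B:ℤ)-1)*(Nmax t n)) ≤ (Q.card : ℤ) := by
        have h1 : (P.card : ℤ) ≤ ((B:ℤ)-1)*(Nmax t n) := by
          have := hPcard
          calc (P.card : ℤ) ≤ ((B-1) * Nmax t n : ℕ) := by exact_mod_cast hPcard
            _ = ((B:ℤ)-1)*(Nmax t n) := by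
              push_cast [Nat.cast_sub (by omega : 1 ≤ B)]
              ring
        have h2 : ((t:ℤ)^n) = (P.card : ℤ) + Q.card := by exact_mod_cast cardsplit.symm
        linarith
      have h3 : ((t:ℤ)^n - ((B:ℤ)-1)*(Nmax t n)) * (B:ℤ)^2 ≤ ∑ x : Fin n → Fin t, (Fz t n x)^2 := by
        calc ((t:ℤ)^n - ((B:ℤ)-1)*(Nmax t n)) * (B:ℤ)^2 ≤ (Q.card : ℤ) * (B:ℤ)^2 := by
              apply mul_le_mul_of_nonneg_right hq (by positivity)
          _ ≤ ∑ x ∈ Q, (Fz t n x)^2 := cheb1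
          _ ≤ _ := cheb2
      calc 3*(t:ℤ)*(((t:ℤ)^n - ((B:ℤ)-1)*(Nmax t n)) * (B:ℤ)^2)
          ≤ 3*(t:ℤ)*(∑ x : Fin n → Fin t, (Fz t n x)^2) := by
            apply mul_le_mul_of_nonneg_left h3 (by positivity)
        _ = (n:ℤ) * (t:ℤ)^n * ((t:ℤ)^3 - t) := moment
    -- pass to reals
    clear hout cheb1 cheb2 cardsplit hPcard hIcard moment hFz
    clear hI_def hP_def hQ_def I P Q hpred_def pred
    clear hB_def hkB hk_def k hpar hM_def M
    clear_value n sq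
    set Nn : ℕ := Nmax t n with hNn_def
    clear_value Nn
    set N : ℝ := (Nn : ℝ) with hN_def
    set b : ℝ := (B : ℝ) with hb_def
    have hA := (@Int.cast_le ℝ _ _ _).mpr key_int
    push_cast at hA
    have htn : (t:ℝ)^n = (t:ℝ)^m * t := by rw [hn_def, pow_succ]
    have hnr2 : ((m:ℝ)+1) = sq^2 := by rw [hsqn, hn_def]; push_cast; ring
    rw [htn] at hA
    rw [← hsqn] at hA
    rw [← hb_def, ← hN_def] at hA
    have hA' : ((t:ℝ)^m*t)*(3*t*b^2 - sq^2*(t:ℝ)^3 + sq^2*t) ≤ 3*t*b^2*(b-1)*N := by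
      nlinarith [hA]
    -- key real inequality
    have hkey := poly_key ((t:ℝ)*sq) b hTb hBT hT2 hTpos
    have step1 : 2*b^2*(b-1) ≤ sq*(3*t*b^2 - sq^2*(t:ℝ)^3 + sq^2*t) := by
      nlinarith [hkey, mul_nonneg (mul_nonneg (Nat.cast_nonneg t : (0:ℝ) ≤ t) (le_of_lt hsq0)) (sq_nonneg sq)]
    -- finish
    have hsub1 : n - 1 = m := by omega
    rw [hsub1]
    rw [div_le_iff₀ (by positivity)]
    have hb3 : (3:ℝ) ≤ b := by
      have : (3:ℝ) ≤ (t:ℝ)*sq := hT3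
      linarith
    have hD : (0:ℝ) < (t:ℝ)*b^2*(b-1) := by
      have h1 : (0:ℝ) < b - 1 := by linarith
      have h2 : (0:ℝ) < (t:ℝ) := by exact_mod_cast ht
      positivity
    have htm : (0:ℝ) < (t:ℝ)^m * t := by
      have h2 : (0:ℝ) < (t:ℝ) := by exact_mod_cast ht
      positivity
    have chain : 2*(t:ℝ)^m * ((t:ℝ)*b^2*(b-1)) ≤ (N*(3*sq)) * ((t:ℝ)*b^2*(b-1)) := by
      calc 2*(t:ℝ)^m * ((t:ℝ)*b^2*(b-1)) = ((t:ℝ)^m*t) * (2*b^2*(b-1)) := by ring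
        _ ≤ ((t:ℝ)^m*t) * (sq*(3*t*b^2 - sq^2*(t:ℝ)^3 + sq^2*t)) :=
            mul_le_mul_of_nonneg_left step1 (le_of_lt htm)
        _ = sq * (((t:ℝ)^m*t)*(3*t*b^2 - sq^2*(t:ℝ)^3 + sq^2*t)) := by ring
        _ ≤ sq * (3*t*b^2*(b-1)*N) := mul_le_mul_of_nonneg_left hA' (le_of_lt hsq0)
        _ = (N*(3*sq)) * ((t:ℝ)*b^2*(b-1)) := by ring
    exact le_of_mul_le_mul_right chain hD
end

section
/- For all integers t, n ≥ 1, the poset [t]^n admits a partition into N(t,n) chains 𝒞 = {C_1,…,C_N} such that whenever y is immediately below x within some chain C_j (i.e., y,x ∈ C_j, y < x, and no z ∈ C_j has y < z < x), then y is covered by x in [t]^n (i.e., y < x and there is no z ∈ [t]^n with y < z < x; equivalently, x and y differ in exactly one coordinate, by exactly 1). -/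
open Finset
open scoped Classical

variable {t n : ℕ}

def rk (x : Fin n → Fin t) : ℕ := ∑ j, (x j : ℕ)

lemma rk_lt_of_lt {x y : Fin n → Fin t} (h : x < y) : rk x < rk y := by
  obtain ⟨hle, i, hi⟩ := Pi.lt_def.mp h
  exact Finset.sum_lt_sum (fun j _ => by exact_mod_cast hle j) ⟨i, Finset.mem_univ i, by exact_mod_cast hi⟩

lemma covBy_of_rk {x y : Fin n → Fin t} (h : x < y) (hr : rk y = rk x + 1) : x ⋖ y :=
  ⟨h, fun z hz1 hz2 => by have := rk_lt_of_lt hz1; have := rk_lt_of_lt hz2; omega⟩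

lemma rk_snoc (x : Fin n → Fin t) (s : Fin t) : rk (Fin.snoc x s) = rk x + s := by
  simp [rk, Fin.sum_univ_castSucc]

lemma snoc_le_snoc {x y : Fin n → Fin t} {s u : Fin t} (h : x ≤ y) (h2 : s ≤ u) :
    (Fin.snoc x s : Fin (n+1) → Fin t) ≤ Fin.snoc y u := by
  intro i
  induction i using Fin.lastCases with
  | last => simpa using h2
  | cast i => simpa using h i

lemma snoc_lt_fst {x y : Fin n → Fin t} {s : Fin t} (h : x < y) :
    (Fin.snoc x s : Fin (n+1) → Fin t) < Fin.snoc y s := by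
  obtain ⟨hle, i, hi⟩ := Pi.lt_def.mp h
  refine Pi.lt_def.mpr ⟨snoc_le_snoc hle le_rfl, ⟨i.castSucc, by simpa using hi⟩⟩

lemma snoc_lt_snd {x : Fin n → Fin t} {s u : Fin t} (h : s < u) :
    (Fin.snoc x s : Fin (n+1) → Fin t) < Fin.snoc x u := by
  refine Pi.lt_def.mpr ⟨snoc_le_snoc le_rfl h.le, ⟨Fin.last n, by simpa using h⟩⟩

lemma snoc_inj {x y : Fin n → Fin t} {s u : Fin t} (h : (Fin.snoc x s : Fin (n+1) → Fin t) = Fin.snoc y u) :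
    x = y ∧ s = u := by
  constructor
  · have := congrArg Fin.init h; simpa using this
  · have := congrArg (fun f => f (Fin.last n)) h; simpa using this
def GoodChain (R : ℕ) (C : Finset (Fin n → Fin t)) : Prop :=
  ∃ (a b : ℕ) (e : ℕ → Fin n → Fin t), a + b = R ∧ a ≤ b ∧
    C = (Finset.Icc a b).image e ∧
    (∀ j ∈ Finset.Icc a b, rk (e j) = j) ∧
    (∀ j, a ≤ j → j < b → e j < e (j + 1))

lemma e_strictMono {a b : ℕ} {e : ℕ → Fin n → Fin t}
    (he : ∀ j, a ≤ j → j < b → e j < e (j + 1)) :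
    ∀ j k, a ≤ j → j < k → k ≤ b → e j < e k := by
  intro j k hj hjk hkb
  induction k with
  | zero => omega
  | succ k ih =>
    rcases Nat.lt_or_ge j k with h | h
    · exact (ih h (by omega)).trans (he k (by omega) (by omega))
    · have : j = k := by omega
      subst this
      exact he j hj (by omega)

lemma e_mono {a b : ℕ} {e : ℕ → Fin n → Fin t}
    (he : ∀ j, a ≤ j → j < b → e j < e (j + 1)) :
    ∀ j k, a ≤ j → j ≤ k → k ≤ b → e j ≤ e k := by
  intro j k hj hjk hkb
  rcases Nat.lt_or_ge j k with h | h
  · exact (e_strictMono he j k hj h hkb).le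
  · have : j = k := by omega
    subst this; rfl
lemma step_chain (ht : 1 ≤ t) {R : ℕ} {C : Finset (Fin n → Fin t)} (hC : GoodChain R C) :
    ∃ 𝒟 : Finset (Finset (Fin (n+1) → Fin t)),
      (∀ y : Fin (n+1) → Fin t, Fin.init y ∈ C → ∃! D, D ∈ 𝒟 ∧ y ∈ D) ∧
      (∀ D ∈ 𝒟, GoodChain (R + (t-1)) D ∧ ∀ y ∈ D, Fin.init y ∈ C) := by
  classical
  obtain ⟨a, b, e, hab, haleb, hCim, hrk, hstep⟩ := hC
  have einj : ∀ p q, p ∈ Finset.Icc a b → q ∈ Finset.Icc a b → e p = e q → p = q := by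
    intro p q hp hq hpq
    have h1 := hrk p hp
    have h2 := hrk q hq
    rw [← h1, ← h2, hpq]
  have htt : ∀ k : ℕ, min k (t-1) < t := by intro k; omega
  set ft : ℕ → Fin t := fun k => ⟨min k (t-1), htt k⟩ with hft
  have ftval : ∀ k, k ≤ t - 1 → (ft k : ℕ) = k := by
    intro k hk; simp only [hft]; simp; omega
  have ftvalFin : ∀ u : Fin t, ft (u : ℕ) = u := by
    intro u
    apply Fin.ext
    rw [ftval _ (by have := u.isLt; omega)]
  set e' : ℕ → ℕ → (Fin (n+1) → Fin t) := fun i j =>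
    if j ≤ b then Fin.snoc (e (j - i)) (ft i) else Fin.snoc (e (b - i)) (ft (j - (b - i)))
    with he'
  set m := min (b - a) (t - 1) with hm
  have hm1 : m ≤ b - a := min_le_left _ _
  have hm2 : m ≤ t - 1 := min_le_right _ _
  refine ⟨(Finset.range (m+1)).image
      (fun i => (Finset.Icc (a+i) (b+(t-1)-i)).image (e' i)), ?_, ?_⟩
  · -- partition property
    intro y hy
    set x := Fin.init y with hx
    set s := y (Fin.last n) with hs
    have hysnoc : (Fin.snoc x s : Fin (n+1) → Fin t) = y := Fin.snoc_init_self y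
    obtain ⟨m₀, hm₀, hem₀⟩ := Finset.mem_image.mp (hCim ▸ hy)
    have hm₀' := Finset.mem_Icc.mp hm₀
    have hslt : (s : ℕ) < t := s.isLt
    obtain ⟨I, hIm, hj₀mem, hkey, huniq⟩ :
        ∃ I, I ≤ m ∧ (m₀ + (s:ℕ)) ∈ Finset.Icc (a+I) (b+(t-1)-I) ∧ e' I (m₀ + (s:ℕ)) = y ∧
          (∀ i' j', i' ≤ m → j' ∈ Finset.Icc (a+i') (b+(t-1)-i') → e' i' j' = y → i' = I) := by
      by_cases hcase : m₀ + (s : ℕ) ≤ b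
      · refine ⟨(s : ℕ), le_min (by omega) (by omega), Finset.mem_Icc.mpr (by omega), ?_, ?_⟩
        · simp only [he']
          rw [if_pos hcase]
          have h1 : m₀ + (s:ℕ) - (s:ℕ) = m₀ := by omega
          rw [h1, hem₀, ftvalFin, hysnoc]
        · intro i' j' hi' hj' hej'
          have hi'2 : i' ≤ t - 1 := le_trans hi' hm2
          have hi'3 : i' ≤ b - a := le_trans hi' hm1
          have hj'' := Finset.mem_Icc.mp hj'
          simp only [he'] at hej'
          rw [← hysnoc] at hej'
          by_cases hc : j' ≤ b
          · rw [if_pos hc] at hej'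
            obtain ⟨hxe, hse⟩ := snoc_inj hej'
            have hsval : (s : ℕ) = i' := by rw [← hse, ftval _ (by omega)]
            exact hsval.symm
          · rw [if_neg hc] at hej'
            obtain ⟨hxe, hse⟩ := snoc_inj hej'
            have hme : m₀ = b - i' :=
              einj _ _ hm₀ (Finset.mem_Icc.mpr (by omega)) (by rw [hem₀, hxe])
            have hsval : (s : ℕ) = j' - (b - i') := by rw [← hse, ftval _ (by omega)]
            omega
      · refine ⟨b - m₀, le_min (by omega) (by omega), Finset.mem_Icc.mpr (by omega), ?_, ?_⟩
        · simp only [he']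
          rw [if_neg (by omega)]
          have h1 : b - (b - m₀) = m₀ := by omega
          rw [h1]
          have h2 : m₀ + (s:ℕ) - m₀ = (s:ℕ) := by omega
          rw [h2, hem₀, ftvalFin, hysnoc]
        · intro i' j' hi' hj' hej'
          have hi'2 : i' ≤ t - 1 := le_trans hi' hm2
          have hi'3 : i' ≤ b - a := le_trans hi' hm1
          have hj'' := Finset.mem_Icc.mp hj'
          simp only [he'] at hej'
          rw [← hysnoc] at hej'
          by_cases hc : j' ≤ b
          · rw [if_pos hc] at hej'
            obtain ⟨hxe, hse⟩ := snoc_inj hej'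
            have hsval : (s : ℕ) = i' := by rw [← hse, ftval _ (by omega)]
            have hme : m₀ = j' - i' :=
              einj _ _ hm₀ (Finset.mem_Icc.mpr (by omega)) (by rw [hem₀, hxe])
            omega
          · rw [if_neg hc] at hej'
            obtain ⟨hxe, hse⟩ := snoc_inj hej'
            have hme : m₀ = b - i' :=
              einj _ _ hm₀ (Finset.mem_Icc.mpr (by omega)) (by rw [hem₀, hxe])
            omega
    refine ⟨(Finset.Icc (a+I) (b+(t-1)-I)).image (e' I), ⟨?_, ?_⟩, ?_⟩
    · exact Finset.mem_image.mpr ⟨I, Finset.mem_range.mpr (by omega), rfl⟩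
    · exact Finset.mem_image.mpr ⟨m₀ + (s:ℕ), hj₀mem, hkey⟩
    · rintro D' ⟨hD'mem, hyD'⟩
      obtain ⟨i', hi'r, rfl⟩ := Finset.mem_image.mp hD'mem
      obtain ⟨j', hj'mem, hej'⟩ := Finset.mem_image.mp hyD'
      have : i' = I := huniq i' j' (by have := Finset.mem_range.mp hi'r; omega) hj'mem hej'
      rw [this]
  · -- each chain is good
    intro D hD
    obtain ⟨i, hir, rfl⟩ := Finset.mem_image.mp hD
    have him : i ≤ m := by have := Finset.mem_range.mp hir; omega
    have him1 : i ≤ b - a := le_trans him hm1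
    have him2 : i ≤ t - 1 := le_trans him hm2
    constructor
    · refine ⟨a + i, b + (t-1) - i, e' i, by omega, by omega, rfl, ?_, ?_⟩
      · intro j hj
        have hj' := Finset.mem_Icc.mp hj
        simp only [he']
        by_cases hcase : j ≤ b
        · rw [if_pos hcase, rk_snoc, ftval _ (by omega),
            hrk _ (Finset.mem_Icc.mpr (by omega))]
          omega
        · rw [if_neg hcase, rk_snoc, ftval _ (by omega),
            hrk _ (Finset.mem_Icc.mpr (by omega))]
          omega
      · intro j hj1 hj2
        simp only [he']
        by_cases hc1 : j + 1 ≤ b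
        · rw [if_pos (by omega : j ≤ b), if_pos hc1]
          have h2 : j + 1 - i = (j - i) + 1 := by omega
          rw [h2]
          exact snoc_lt_fst (hstep (j - i) (by omega) (by omega))
        · by_cases hc2 : j ≤ b
          · rw [if_pos hc2, if_neg hc1]
            have hjb : j = b := by omega
            have h2 : j + 1 - (b - i) = i + 1 := by omega
            have h3 : j - i = b - i := by omega
            rw [h2, h3]
            apply snoc_lt_snd
            rw [Fin.lt_def, ftval _ (by omega), ftval _ (by omega)]
            omega
          · rw [if_neg hc2, if_neg (by omega : ¬ (j + 1 ≤ b))]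
            apply snoc_lt_snd
            rw [Fin.lt_def, ftval _ (by omega), ftval _ (by omega)]
            omega
    · intro y hy
      obtain ⟨j, hj, rfl⟩ := Finset.mem_image.mp hy
      have hj' := Finset.mem_Icc.mp hj
      simp only [he']
      rw [hCim]
      by_cases hcase : j ≤ b
      · rw [if_pos hcase]
        simp only [Fin.init_snoc]
        exact Finset.mem_image.mpr ⟨j - i, Finset.mem_Icc.mpr (by omega), rfl⟩
      · rw [if_neg hcase]
        simp only [Fin.init_snoc]
        exact Finset.mem_image.mpr ⟨b - i, Finset.mem_Icc.mpr (by omega), rfl⟩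
lemma good_exists (t : ℕ) (ht : 1 ≤ t) (n : ℕ) :
    ∃ 𝒞 : Finset (Finset (Fin n → Fin t)),
      (∀ x, ∃! C, C ∈ 𝒞 ∧ x ∈ C) ∧ (∀ C ∈ 𝒞, GoodChain ((t-1)*n) C) := by
  classical
  induction n with
  | zero =>
    refine ⟨{{(fun i => i.elim0 : Fin 0 → Fin t)}}, ?_, ?_⟩
    · intro x
      have hx : x = (fun i => i.elim0 : Fin 0 → Fin t) := by
        funext i; exact i.elim0
      refine ⟨{(fun i => i.elim0 : Fin 0 → Fin t)}, ⟨Finset.mem_singleton_self _, ?_⟩, ?_⟩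
      · rw [hx]; exact Finset.mem_singleton_self _
      · rintro C ⟨hC, _⟩
        exact Finset.mem_singleton.mp hC
    · intro C hC
      rw [Finset.mem_singleton.mp hC]
      refine ⟨0, 0, fun _ => (fun i => i.elim0 : Fin 0 → Fin t), by omega, le_rfl, ?_, ?_, ?_⟩
      · simp
      · intro j hj
        have : j = 0 := by simpa using hj
        subst this
        simp [rk]
      · intro j hj1 hj2; omega
  | succ n ih =>
    obtain ⟨𝒞, hpart, hgood⟩ := ih
    obtain ⟨F, hF⟩ : ∃ F : Finset (Fin n → Fin t) → Finset (Finset (Fin (n+1) → Fin t)),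
        ∀ C ∈ 𝒞, (∀ y : Fin (n+1) → Fin t, Fin.init y ∈ C → ∃! D, D ∈ F C ∧ y ∈ D) ∧
          (∀ D ∈ F C, GoodChain ((t-1)*n + (t-1)) D ∧ ∀ y ∈ D, Fin.init y ∈ C) := by
      refine ⟨fun C => if h : GoodChain ((t-1)*n) C then Classical.choose (step_chain ht h)
        else ∅, ?_⟩
      intro C hC
      have h := hgood C hC
      simp only [dif_pos h]
      exact ⟨(Classical.choose_spec (step_chain ht h)).1,
        (Classical.choose_spec (step_chain ht h)).2⟩
    have hR : (t-1)*(n+1) = (t-1)*n + (t-1) := by ring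
    refine ⟨𝒞.biUnion F, ?_, ?_⟩
    · intro y
      obtain ⟨C, ⟨hC𝒞, hxC⟩, hCuniq⟩ := hpart (Fin.init y : Fin n → Fin t)
      obtain ⟨D, ⟨hDF, hyD⟩, hDuniq⟩ := (hF C hC𝒞).1 y hxC
      refine ⟨D, ⟨Finset.mem_biUnion.mpr ⟨C, hC𝒞, hDF⟩, hyD⟩, ?_⟩
      rintro D' ⟨hD', hyD'⟩
      obtain ⟨C', hC', hD'F⟩ := Finset.mem_biUnion.mp hD'
      have hxC' : Fin.init y ∈ C' := ((hF C' hC').2 D' hD'F).2 y hyD'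
      have hCC : C' = C := hCuniq C' ⟨hC', hxC'⟩
      subst hCC
      exact hDuniq D' ⟨hD'F, hyD'⟩
    · intro D hD
      obtain ⟨C', hC', hD'F⟩ := Finset.mem_biUnion.mp hD
      rw [hR]
      exact ((hF C' hC').2 D hD'F).1
lemma good_rk_unique {R : ℕ} {C : Finset (Fin n → Fin t)} (hC : GoodChain R C)
    {x y : Fin n → Fin t} (hx : x ∈ C) (hy : y ∈ C) (h : rk x = rk y) : x = y := by
  obtain ⟨a, b, e, hab, haleb, hCim, hrk, hstep⟩ := hC
  obtain ⟨p, hp, rfl⟩ := Finset.mem_image.mp (hCim ▸ hx)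
  obtain ⟨q, hq, rfl⟩ := Finset.mem_image.mp (hCim ▸ hy)
  rw [hrk p hp, hrk q hq] at h
  rw [h]


/-- `[t]^n` admits a partition into `N(t,n)` nonempty chains such that
consecutive elements of each chain are in covering relation in `[t]^n`. -/
theorem stmt11 (t n : ℕ) (ht : 1 ≤ t) (hn : 1 ≤ n) :
    ∃ 𝒞 : Finset (Finset (Fin n → Fin t)),
      𝒞.card = Nmax t n ∧
      (∀ C ∈ 𝒞, C.Nonempty) ∧
      (∀ x : Fin n → Fin t, ∃! C, C ∈ 𝒞 ∧ x ∈ C) ∧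
      (∀ C ∈ 𝒞, IsChain (· ≤ ·) (C : Set (Fin n → Fin t))) ∧
      (∀ C ∈ 𝒞, ∀ x ∈ C, ∀ y ∈ C, y < x → (∀ z ∈ C, ¬(y < z ∧ z < x)) → y ⋖ x) := by
  classical
  obtain ⟨𝒞, hpart, hgood⟩ := good_exists t ht n
  set R := (t-1)*n with hR
  choose ch hch using fun x => (hpart x).exists
  have hchu : ∀ (x : Fin n → Fin t) (C : Finset (Fin n → Fin t)),
      C ∈ 𝒞 → x ∈ C → ch x = C := by
    intro x C hC hx
    exact ((hpart x).unique (hch x) ⟨hC, hx⟩)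
  have hlevel : ∀ i, levelCard t n i = (Finset.univ.filter (fun x : Fin n → Fin t => rk x = i)).card := by
    intro i; rfl
  refine ⟨𝒞, ?_, ?_, hpart, ?_, ?_⟩
  · -- cardinality
    have hA : ∀ i, levelCard t n i ≤ 𝒞.card := by
      intro i
      rw [hlevel]
      apply Finset.card_le_card_of_injOn ch
      · intro x hx
        exact (hch x).1
      · intro x hx y hy hxy
        have hx' := (Finset.mem_filter.mp hx).2
        have hy' := (Finset.mem_filter.mp hy).2
        have h1 : x ∈ ch x := (hch x).2
        have h2 : y ∈ ch x := hxy ▸ (hch y).2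
        exact good_rk_unique (hgood (ch x) (hch x).1) h1 h2 (by rw [hx', hy'])
    have hB : levelCard t n (R/2) = 𝒞.card := by
      rw [hlevel]
      apply Finset.card_bij (fun x _ => ch x)
      · intro x hx
        exact (hch x).1
      · intro x hx y hy hxy
        have hx' := (Finset.mem_filter.mp hx).2
        have hy' := (Finset.mem_filter.mp hy).2
        have h1 : x ∈ ch x := (hch x).2
        have h2 : y ∈ ch x := hxy ▸ (hch y).2
        exact good_rk_unique (hgood (ch x) (hch x).1) h1 h2 (by rw [hx', hy'])
      · intro C hC
        obtain ⟨a, b, e, hab, haleb, hCim, hrk, hstep⟩ := hgood C hC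
        have hmid : R/2 ∈ Finset.Icc a b := Finset.mem_Icc.mpr (by omega)
        have hmem : e (R/2) ∈ C := hCim ▸ Finset.mem_image.mpr ⟨R/2, hmid, rfl⟩
        refine ⟨e (R/2), Finset.mem_filter.mpr ⟨Finset.mem_univ _, hrk _ hmid⟩, ?_⟩
        exact hchu _ C hC hmem
    rw [Nmax]
    apply le_antisymm
    · rw [← hB]
      apply Finset.le_sup (f := levelCard t n)
      rw [Finset.mem_range, ← hR]
      omega
    · apply Finset.sup_le
      intro i _
      exact hA i
  · -- nonempty
    intro C hC
    obtain ⟨a, b, e, hab, haleb, hCim, hrk, hstep⟩ := hgood C hC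
    rw [hCim]
    exact (Finset.nonempty_Icc.mpr haleb).image e
  · -- chains
    intro C hC
    obtain ⟨a, b, e, hab, haleb, hCim, hrk, hstep⟩ := hgood C hC
    intro x hx y hy _
    obtain ⟨p, hp, rfl⟩ := Finset.mem_image.mp (hCim ▸ (Finset.mem_coe.mp hx))
    obtain ⟨q, hq, rfl⟩ := Finset.mem_image.mp (hCim ▸ (Finset.mem_coe.mp hy))
    have hp' := Finset.mem_Icc.mp hp
    have hq' := Finset.mem_Icc.mp hq
    rcases le_total p q with h | h
    · exact Or.inl (e_mono hstep p q (by omega) h (by omega))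
    · exact Or.inr (e_mono hstep q p (by omega) h (by omega))
  · -- saturation
    intro C hC x hx y hy hyx hnomid
    obtain ⟨a, b, e, hab, haleb, hCim, hrk, hstep⟩ := hgood C hC
    obtain ⟨p, hp, rfl⟩ := Finset.mem_image.mp (hCim ▸ hx)
    obtain ⟨q, hq, rfl⟩ := Finset.mem_image.mp (hCim ▸ hy)
    have hp' := Finset.mem_Icc.mp hp
    have hq' := Finset.mem_Icc.mp hq
    have hlt : rk (e q) < rk (e p) := rk_lt_of_lt hyx
    rw [hrk p hp, hrk q hq] at hlt
    rcases Nat.lt_or_ge (q+1) p with hcase | hcase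
    · exfalso
      have hz : e (q+1) ∈ C := hCim ▸ Finset.mem_image.mpr
        ⟨q+1, Finset.mem_Icc.mpr (by omega), rfl⟩
      refine hnomid (e (q+1)) hz ⟨?_, ?_⟩
      · exact hstep q (by omega) (by omega)
      · exact e_strictMono hstep (q+1) p (by omega) hcase (by omega)
    · have hpq : p = q + 1 := by omega
      apply covBy_of_rk hyx
      rw [hrk p hp, hrk q hq, hpq]
end

section
/- In the poset [3]^n = {0,1,2}^n with levels P_0,…,P_{2n} by coordinate sum, for every i ≥ 1 and every x ∈ P_i we have d_{N^{i−1}(x)} − d^{i−1}(x) ≥ n − i, where d^{i−1}(x) is the number of elements of P_{i−1} below x that differ from x in one coordinate (equivalently all elements of P_{i−1} comparable to x) and d_{N^{i−1}(x)} = min{ d^i(w) : w ∈ N^{i−1}(x) } with d^i(w) the number of elements of P_i comparable to w. -/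
open Finset
open scoped Classical

/-- The lower-shadow neighborhood `N^{i−1}(x)`: the elements of level `i−1` of `[3]^n`
below `x`. -/
noncomputable def lowerNbr (n i : ℕ) (x : Fin n → Fin 3) : Finset (Fin n → Fin 3) :=
  Finset.univ.filter (fun y => (∑ j, (y j : ℕ)) = i - 1 ∧ y < x)

/-- The up-degree `d^i(w)`: the number of elements of level `i` of `[3]^n` above `w`. -/
noncomputable def upDeg (n i : ℕ) (w : Fin n → Fin 3) : ℕ :=
  (Finset.univ.filter (fun z : Fin n → Fin 3 => (∑ j, (z j : ℕ)) = i ∧ w < z)).card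

/-!
The lower neighbours of `x` are obtained by lowering one nonzero coordinate of `x`, so there are
at most `d₁(x) + d₂(x)` of them. Any such `w` lies below `x`, so it can be raised by one in each
coordinate where `x` is not `2`, and these raisings are distinct elements of level `i` above `w`:
`d^i(w) ≥ d₀(x) + d₁(x)`. Finally `(d₀ + d₁) - (d₁ + d₂) = n - (d₁ + 2 d₂) = n - i`.
-/

open Function

section ProductOfChains

variable {ι : Type*} [DecidableEq ι] {m : ℕ}

lemma sum_val_update_add [Fintype ι] (x : ι → Fin m) (j : ι) (v : Fin m) :
    ∑ k, (update x j v k : ℕ) + x j = ∑ k, (x k : ℕ) + v := by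
  have hcomp : (fun k => (update x j v k : ℕ)) = update (fun k => (x k : ℕ)) j v := by
    funext k
    exact apply_update (fun _ (a : Fin m) => (a : ℕ)) x j v k
  rw [hcomp, sum_update_of_mem (mem_univ j),
    ← add_sum_erase _ _ (mem_univ j), sdiff_singleton_eq_erase]
  ring

/-- `x j - 1` is subtraction modulo `m + 1`, hence the side condition `x j ≠ 0`. -/
lemma exists_eq_update_sub_one_of_lt [Fintype ι] {x y : ι → Fin (m + 1)} (hlt : y < x)
    (hsum : ∑ k, (x k : ℕ) = ∑ k, (y k : ℕ) + 1) :
    ∃ j, x j ≠ 0 ∧ y = update x j (x j - 1) := by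
  obtain ⟨hle, j, hj⟩ := Pi.lt_def.mp hlt
  have hxj : x j ≠ 0 := (Fin.zero_le _ |>.trans_lt hj).ne'
  have hxj_val : (x j - 1 : Fin (m + 1)).val = x j - 1 := Fin.val_sub_one_of_ne_zero hxj
  refine ⟨j, hxj, ?_⟩
  have hle' : ∀ k ∈ univ, (y k : ℕ) ≤ update x j (x j - 1) k := by
    intro k _
    rcases eq_or_ne k j with rfl | hk
    · rw [update_self, hxj_val]; exact Nat.le_sub_one_of_lt hj
    · rw [update_of_ne hk]; exact hle k
  have hsum' : ∑ k, (y k : ℕ) = ∑ k, (update x j (x j - 1) k : ℕ) := by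
    have := sum_val_update_add x j (x j - 1)
    have : 0 < (x j : ℕ) := Fin.pos_iff_ne_zero.mpr hxj
    omega
  funext k
  exact Fin.ext ((sum_eq_sum_iff_of_le hle').mp hsum' k (mem_univ k))

lemma lt_update_add_one {w : ι → Fin (m + 1)} {k : ι} (hk : w k ≠ Fin.last m) :
    w < update w k (w k + 1) := by
  rw [lt_update_self_iff]
  exact Fin.lt_add_one_iff.mpr (Fin.lt_last_iff_ne_last.mpr hk)

lemma injOn_update_add_one (w : ι → Fin (m + 1)) :
    Set.InjOn (fun k => update w k (w k + 1)) {k | w k ≠ Fin.last m} := by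
  intro k hk k' _ heq
  by_contra hne
  have hwk := congrFun heq k
  simp only [update_self, update_of_ne hne] at hwk
  exact (Fin.lt_add_one_iff.mpr (Fin.lt_last_iff_ne_last.mpr hk)).ne' hwk

end ProductOfChains

lemma card_filter_ne_zero_add_card_eq {ι : Type*} [Fintype ι] (x : ι → Fin 3) :
    #{k | x k ≠ 0} + Fintype.card ι = #{k | x k ≠ 2} + ∑ k, (x k : ℕ) := by
  rw [card_filter, card_filter, ← card_univ, card_eq_sum_ones, ← sum_add_distrib,
    ← sum_add_distrib]
  refine sum_congr rfl fun k _ => ?_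
  generalize x k = v
  fin_cases v <;> rfl

lemma lowerNbr_eq_image {n i : ℕ} {x : Fin n → Fin 3} (hi : 1 ≤ i) (hx : ∑ j, (x j : ℕ) = i) :
    lowerNbr n i x = image (fun j => update x j (x j - 1)) {j | x j ≠ 0} := by
  ext y
  simp only [lowerNbr, mem_filter, mem_image, mem_univ, true_and]
  constructor
  · rintro ⟨hy, hlt⟩
    obtain ⟨j, hj, rfl⟩ := exists_eq_update_sub_one_of_lt hlt (by omega)
    exact ⟨j, hj, rfl⟩
  · rintro ⟨j, hj, rfl⟩
    have := sum_val_update_add x j (x j - 1)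
    rw [Fin.val_sub_one_of_ne_zero hj] at this
    have : 0 < (x j : ℕ) := Fin.pos_iff_ne_zero.mpr hj
    exact ⟨by omega, update_lt_self_iff.mpr (Fin.sub_one_lt_iff.mpr this)⟩

lemma card_filter_ne_two_le_upDeg {n i : ℕ} {w : Fin n → Fin 3} (hw : ∑ j, (w j : ℕ) + 1 = i) :
    #{k | w k ≠ 2} ≤ upDeg n i w := by
  refine card_le_card_of_injOn (fun k => update w k (w k + 1)) (fun k hk => ?_)
    ((injOn_update_add_one w).mono fun k hk => (mem_filter.mp hk).2)
  have hk : w k ≠ Fin.last 2 := (mem_filter.mp hk).2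
  have := sum_val_update_add w k (w k + 1)
  rw [Fin.val_add_one_of_lt (Fin.lt_last_iff_ne_last.mpr hk)] at this
  simp only [coe_filter, mem_univ, true_and, Set.mem_ofPred_eq]
  exact ⟨by omega, lt_update_add_one hk⟩

lemma card_filter_ne_two_le_upDeg_of_mem_lowerNbr {n i : ℕ} {x w : Fin n → Fin 3} (hi : 1 ≤ i)
    (hx : ∑ j, (x j : ℕ) = i) (hw : w ∈ lowerNbr n i x) :
    #{k | x k ≠ 2} ≤ upDeg n i w := by
  simp only [lowerNbr, mem_filter, mem_univ, true_and] at hw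
  obtain ⟨hwsum, hwx⟩ := hw
  refine (card_le_card fun k hk => ?_).trans (card_filter_ne_two_le_upDeg (by omega))
  simp only [mem_filter, mem_univ, true_and] at hk ⊢
  exact fun h => hk (le_antisymm (Fin.le_last _) (h ▸ hwx.le k))

/-- In `[3]^n`, for every `i ≥ 1` and `x` in level `P_i`,
`d_{N^{i−1}(x)} − d^{i−1}(x) ≥ n − i`, where
`d_{N^{i−1}(x)} = min { d^i(w) : w ∈ N^{i−1}(x) }` and `d^{i−1}(x) = |N^{i−1}(x)|`. -/
theorem stmt17 (n i : ℕ) (hi : 1 ≤ i) (x : Fin n → Fin 3)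
    (hx : (∑ j, (x j : ℕ)) = i) :
    ((n : ℤ) - i) ≤
      ((WithTop.untopD 0 ((lowerNbr n i x).image (upDeg n i)).min : ℕ) : ℤ) -
        ((lowerNbr n i x).card : ℤ) := by
  have hN := lowerNbr_eq_image hi hx
  obtain ⟨j, hj⟩ : ∃ j, x j ≠ 0 := by
    by_contra! h
    simp only [h, Fin.val_zero, sum_const_zero] at hx
    omega
  have hne : ((lowerNbr n i x).image (upDeg n i)).Nonempty := by
    rw [hN]
    exact (Nonempty.image ⟨j, by simpa using hj⟩ _).image _
  have hmin : #{k | x k ≠ 2} ≤ ((lowerNbr n i x).image (upDeg n i)).min' hne :=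
    le_min' _ _ _ fun d hd => by
      obtain ⟨w, hw, rfl⟩ := mem_image.mp hd
      exact card_filter_ne_two_le_upDeg_of_mem_lowerNbr hi hx hw
  have hcard : #(lowerNbr n i x) ≤ #{k | x k ≠ 0} := hN ▸ card_image_le
  have hcount := card_filter_ne_zero_add_card_eq x
  rw [Fintype.card_fin, hx] at hcount
  rw [← coe_min' hne, WithTop.untopD_coe]
  omega
end
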